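/- arXiv:2305.04085 — 5 statements merged into one kernel-verified Lean document; each statement's English description precedes it below -/
import Mathlib

section
/- In a weighted potential game where each player's strategy set Ω_i is convex, each player's cost b_i(·, Θ_{-i}) is convex, and the potential P is convex and continuously differentiable on Ω = ∏_i Ω_i, every Nash equilibrium of the game is a global minimizer of P over Ω. -/
/-!
At a Nash equilibrium no player can lower its cost by a unilateral deviation, and since the
weights are positive the potential changes with the same sign, so `Θstar` minimizes `P` along
every coordinate slice. Each slice is convex, so the directional derivative of `P` at `Θstar`
towards `update Θstar i (Θ i)` is nonnegative; these directions sum to `Θ - Θstar`, and the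
gradient inequality of the convex function `P` then gives `P Θstar ≤ P Θ`.
-/

open Set

section FirstOrder

variable {E : Type*} [NormedAddCommGroup E] [NormedSpace ℝ E] {f : E → ℝ} {f' : E →L[ℝ] ℝ}
  {s : Set E} {x y : E}

theorem ConvexOn.hasFDerivAt_le_sub (hf : ConvexOn ℝ s f) (hx : x ∈ s) (hy : y ∈ s)
    (hf' : HasFDerivAt f f' x) : f' (y - x) ≤ f y - f x := by
  set line := AffineMap.lineMap (k := ℝ) x y
  have hline : ConvexOn ℝ (line ⁻¹' s) (f ∘ line) := hf.comp_affineMap line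
  have hderiv : HasDerivAt (f ∘ line) (f' (y - x)) 0 :=
    HasFDerivAt.comp_hasDerivAt (0 : ℝ) (by simpa [line] using hf') AffineMap.hasDerivAt_lineMap
  simpa [line, slope_def_field] using
    hline.le_slope_of_hasDerivAt (by simpa [line] using hx) (by simpa [line] using hy) one_pos hderiv

theorem IsMinOn.hasFDerivAt_nonneg_of_segment_subset (h : IsMinOn f s x)
    (hf' : HasFDerivAt f f' x) (hxy : segment ℝ x y ⊆ s) : 0 ≤ f' (y - x) :=
  h.localize.hasFDerivWithinAt_nonneg hf'.hasFDerivWithinAt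
    (sub_mem_posTangentConeAt_of_segment_subset hxy)

end FirstOrder

theorem Finset.univ_sum_update_sub {ι : Type*} [Fintype ι] [DecidableEq ι] {M : ι → Type*}
    [∀ i, AddCommGroup (M i)] (x y : ∀ i, M i) :
    ∑ i, (Function.update x i (y i) - x) = y - x := by
  have hsingle : ∀ i, Function.update x i (y i) - x = Pi.single i (y i - x i) := by
    intro i
    ext j
    rcases eq_or_ne j i with rfl | hj
    · simp
    · simp [hj]
  simp only [hsingle, Finset.univ_sum_single]
  rfl

theorem isMinOn_univ_pi_of_forall_update {ι : Type*} [Fintype ι] [DecidableEq ι]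
    {E : ι → Type*} [∀ i, NormedAddCommGroup (E i)] [∀ i, NormedSpace ℝ (E i)]
    {s : ∀ i, Set (E i)} {f : (∀ i, E i) → ℝ} {x : ∀ i, E i} (hs : ∀ i, Convex ℝ (s i))
    (hf : ConvexOn ℝ (univ.pi s) f) (hfx : DifferentiableAt ℝ f x) (hx : x ∈ univ.pi s)
    (hmin : ∀ i, ∀ θ ∈ s i, f x ≤ f (Function.update x i θ)) :
    IsMinOn f (univ.pi s) x := by
  intro y hy
  have hcoord : ∀ i, 0 ≤ fderiv ℝ f x (Function.update x i (y i) - x) := by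
    intro i
    have hseg : segment ℝ x (Function.update x i (y i)) =
        Function.update x i '' segment ℝ (x i) (y i) := by
      rw [Pi.image_update_segment, Function.update_eq_self]
    refine IsMinOn.hasFDerivAt_nonneg_of_segment_subset (s := Function.update x i '' s i)
      ?_ hfx.hasFDerivAt ?_
    · rintro _ ⟨θ, hθ, rfl⟩
      exact hmin i θ hθ
    · rw [hseg]
      exact image_mono ((hs i).segment_subset (hx i trivial) (hy i trivial))
  have hgrad : 0 ≤ fderiv ℝ f x (y - x) := by
    rw [← Finset.univ_sum_update_sub x y, map_sum]
    exact Finset.sum_nonneg fun i _ => hcoord i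
  exact sub_nonneg.mp (hgrad.trans (hf.hasFDerivAt_le_sub hx hy hfx.hasFDerivAt))

theorem stmt7_general {ι : Type} [Fintype ι] [DecidableEq ι] (n : ι → ℕ)
    (Ω : ∀ i, Set (EuclideanSpace ℝ (Fin (n i))))
    (b : ι → (∀ i, EuclideanSpace ℝ (Fin (n i))) → ℝ)
    (ω : ι → ℝ) (hω : ∀ i, 0 < ω i)
    (P : (∀ i, EuclideanSpace ℝ (Fin (n i))) → ℝ)
    (hpot : ∀ (i : ι) (Θ : ∀ j, EuclideanSpace ℝ (Fin (n j))) (θ' : EuclideanSpace ℝ (Fin (n i))),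
      b i (Function.update Θ i θ') - b i Θ =
        ω i * (P (Function.update Θ i θ') - P Θ))
    (hΩconv : ∀ i, Convex ℝ (Ω i))
    (hPconv : ConvexOn ℝ (Set.pi Set.univ Ω) P)
    (hPdiff : ContDiff ℝ 1 P)
    (Θstar : ∀ i, EuclideanSpace ℝ (Fin (n i)))
    (hΘ : Θstar ∈ Set.pi Set.univ Ω)
    (hNE : ∀ i, ∀ θ ∈ Ω i, b i Θstar ≤ b i (Function.update Θstar i θ)) :
    ∀ Θ ∈ Set.pi Set.univ Ω, P Θstar ≤ P Θ := by
  have hcoord : ∀ i, ∀ θ ∈ Ω i, P Θstar ≤ P (Function.update Θstar i θ) := by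
    intro i θ hθ
    have hb : 0 ≤ ω i * (P (Function.update Θstar i θ) - P Θstar) := by
      rw [← hpot]
      exact sub_nonneg.mpr (hNE i θ hθ)
    exact sub_nonneg.mp (nonneg_of_mul_nonneg_right hb (hω i))
  exact isMinOn_univ_pi_of_forall_update hΩconv hPconv
    (hPdiff.differentiable one_ne_zero Θstar) hΘ hcoord

/-- In a weighted potential game with convex strategy sets, convex individual costs and a
convex continuously differentiable potential, every Nash equilibrium is a global minimizer
of the potential over the joint strategy set. -/
theorem stmt7 {ι : Type} [Fintype ι] [DecidableEq ι] (n : ι → ℕ)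
    (Ω : ∀ i, Set (EuclideanSpace ℝ (Fin (n i))))
    (b : ι → (∀ i, EuclideanSpace ℝ (Fin (n i))) → ℝ)
    (ω : ι → ℝ) (hω : ∀ i, 0 < ω i)
    (P : (∀ i, EuclideanSpace ℝ (Fin (n i))) → ℝ)
    (hpot : ∀ (i : ι) (Θ : ∀ j, EuclideanSpace ℝ (Fin (n j))) (θ' : EuclideanSpace ℝ (Fin (n i))),
      b i (Function.update Θ i θ') - b i Θ =
        ω i * (P (Function.update Θ i θ') - P Θ))
    (hΩconv : ∀ i, Convex ℝ (Ω i))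
    (hbconv : ∀ i Θ, ConvexOn ℝ (Ω i) (fun θ => b i (Function.update Θ i θ)))
    (hPconv : ConvexOn ℝ (Set.pi Set.univ Ω) P)
    (hPdiff : ContDiff ℝ 1 P)
    (Θstar : ∀ i, EuclideanSpace ℝ (Fin (n i)))
    (hΘ : Θstar ∈ Set.pi Set.univ Ω)
    (hNE : ∀ i, ∀ θ ∈ Ω i, b i Θstar ≤ b i (Function.update Θstar i θ)) :
    ∀ Θ ∈ Set.pi Set.univ Ω, P Θstar ≤ P Θ :=
  stmt7_general n Ω b ω hω P hpot hΩconv hPconv hPdiff Θstar hΘ hNE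
end

section
/- The game with individual billing b_i(Θ) = Σ_t (λ_imp^t l_i^{t+} − λ_exp^t l_i^{t−} + α l_i^t L^t) + β p̄_i, where L^t = Σ_j l_j^t, is an exact potential game with potential P(Θ) = f(Θ) − (α/2) Σ_t Σ_i l_i^t L_{-i}^t, where f(Θ) = Σ_t [Σ_i (λ_imp^t l_i^{t+} − λ_exp^t l_i^{t−}) + α (L^t)^2] + Σ_i β p̄_i and L_{-i}^t = Σ_{j≠i} l_j^t. -/
open Finset

/-- A strategy of a member: positive net loads `l⁺`, negative net loads `l⁻` over the
time horizon, and the auxiliary peak variable `p̄`. -/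
abbrev Strat (T : ℕ) : Type := (Fin T → ℝ) × (Fin T → ℝ) × ℝ

/-- Net load `l_i^t = l_i^{t+} - l_i^{t-}`. -/
def netload {N T : ℕ} (Θ : Fin N → Strat T) (i : Fin N) (t : Fin T) : ℝ :=
  (Θ i).1 t - (Θ i).2.1 t

/-- Aggregate net load `L^t = ∑_i l_i^t`. -/
def aggload {N T : ℕ} (Θ : Fin N → Strat T) (t : Fin T) : ℝ :=
  ∑ i, netload Θ i t

/-- Continuous proportional individual bill `b_i^{CP1}`. -/
def bill {N T : ℕ} (lamImp lamExp : Fin T → ℝ) (α β : ℝ)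
    (Θ : Fin N → Strat T) (i : Fin N) : ℝ :=
  (∑ t, (lamImp t * (Θ i).1 t - lamExp t * (Θ i).2.1 t + α * netload Θ i t * aggload Θ t))
    + β * (Θ i).2.2

/-- Total community cost `f¹`. -/
def totalCost {N T : ℕ} (lamImp lamExp : Fin T → ℝ) (α β : ℝ)
    (Θ : Fin N → Strat T) : ℝ :=
  (∑ t, ((∑ i, (lamImp t * (Θ i).1 t - lamExp t * (Θ i).2.1 t)) + α * (aggload Θ t) ^ 2))
    + ∑ i, β * (Θ i).2.2

/-- Exact potential `P = f¹ - (α/2) ∑_t ∑_i l_i^t L_{-i}^t`. -/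
noncomputable def potential {N T : ℕ} (lamImp lamExp : Fin T → ℝ) (α β : ℝ)
    (Θ : Fin N → Strat T) : ℝ :=
  totalCost lamImp lamExp α β Θ -
    α / 2 * ∑ t, ∑ i, netload Θ i t * (aggload Θ t - netload Θ i t)

/-!
Writing `c_j = ownCost (Θ j)` for the price and peak terms of member `j`, the bill
is `b_i = c_i + α ∑_t l_i^t L^t`, and since `∑_j l_j^t L_{-j}^t = (L^t)² - ∑_j (l_j^t)²` the
potential is `P = ∑_j c_j + (α/2) ∑_t ((L^t)² + ∑_j (l_j^t)²)`. A unilateral deviation of `i`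
changes `∑_j c_j` by exactly the change of `c_i`, and the identity
`2 (a L' - l_i L) = (L'² + ∑_j l_j'²) - (L² + ∑_j l_j²)`, valid whenever `l'` differs from `l`
only in the `i`-th entry `a`, matches the interaction terms.
-/

section UpdateSum

variable {ι : Type*} [Fintype ι] [DecidableEq ι]

theorem Finset.sum_apply_update_sub_sum {α M : Type*} [AddCommGroup M] (g : α → M) (x : ι → α)
    (i : ι) (a : α) :
    ∑ j, g (Function.update x i a j) - ∑ j, g (x j) = g a - g (x i) := by
  rw [← add_sum_erase _ _ (mem_univ i), ← add_sum_erase _ _ (mem_univ i), Function.update_self,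
    sum_congr rfl fun j hj => by rw [Function.update_of_ne (ne_of_mem_erase hj)]]
  abel

theorem two_mul_sub_eq_sq_sum_add_sum_sq_sub {R : Type*} [CommRing R] (x : ι → R) (i : ι)
    (a : R) :
    2 * (a * ∑ j, Function.update x i a j - x i * ∑ j, x j) =
      ((∑ j, Function.update x i a j) ^ 2 + ∑ j, Function.update x i a j ^ 2) -
        ((∑ j, x j) ^ 2 + ∑ j, x j ^ 2) := by
  have hsum := sum_apply_update_sub_sum (fun y => y) x i a
  have hsq := sum_apply_update_sub_sum (fun y => y ^ 2) x i a
  linear_combination (a + x i - ∑ j, Function.update x i a j - ∑ j, x j) * hsum - hsq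

end UpdateSum

section Billing

variable {N T : ℕ} (lamImp lamExp : Fin T → ℝ) (α β : ℝ)

def ownCost (s : Strat T) : ℝ :=
  ∑ t, (lamImp t * s.1 t - lamExp t * s.2.1 t) + β * s.2.2

theorem bill_eq_ownCost_add (Θ : Fin N → Strat T) (i : Fin N) :
    bill lamImp lamExp α β Θ i =
      ownCost lamImp lamExp β (Θ i) + α * ∑ t, netload Θ i t * aggload Θ t := by
  simp only [bill, ownCost, sum_add_distrib, mul_sum, mul_assoc]
  ring

theorem sum_netload_mul_sub (Θ : Fin N → Strat T) (t : Fin T) :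
    ∑ j, netload Θ j t * (aggload Θ t - netload Θ j t) =
      aggload Θ t ^ 2 - ∑ j, netload Θ j t ^ 2 := by
  simp only [mul_sub, sum_sub_distrib, ← sum_mul, sq, aggload]

theorem potential_eq_sum_ownCost_add (Θ : Fin N → Strat T) :
    potential lamImp lamExp α β Θ =
      ∑ j, ownCost lamImp lamExp β (Θ j) +
        α / 2 * ∑ t, (aggload Θ t ^ 2 + ∑ j, netload Θ j t ^ 2) := by
  have hown : ∑ j, ownCost lamImp lamExp β (Θ j) =
      ∑ t, ∑ j, (lamImp t * (Θ j).1 t - lamExp t * (Θ j).2.1 t) + ∑ j, β * (Θ j).2.2 := by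
    rw [← sum_comm]
    exact sum_add_distrib
  rw [hown]
  simp only [potential, totalCost, sum_netload_mul_sub, sum_add_distrib, sum_sub_distrib, ← mul_sum]
  ring

theorem netload_update (Θ : Fin N → Strat T) (i : Fin N) (s : Strat T) (j : Fin N) (t : Fin T) :
    netload (Function.update Θ i s) j t =
      Function.update (fun k => netload Θ k t) i (s.1 t - s.2.1 t) j :=
  Function.apply_update (fun _ s => s.1 t - s.2.1 t) Θ i s j

theorem two_mul_sum_interaction_update_sub (Θ : Fin N → Strat T) (i : Fin N) (s : Strat T) :
    2 * (∑ t, netload (Function.update Θ i s) i t * aggload (Function.update Θ i s) t -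
        ∑ t, netload Θ i t * aggload Θ t) =
      ∑ t, (aggload (Function.update Θ i s) t ^ 2 +
          ∑ j, netload (Function.update Θ i s) j t ^ 2) -
        ∑ t, (aggload Θ t ^ 2 + ∑ j, netload Θ j t ^ 2) := by
  rw [← sum_sub_distrib, ← sum_sub_distrib, mul_sum]
  refine sum_congr rfl fun t _ => ?_
  simp only [aggload, netload_update, Function.update_self]
  exact two_mul_sub_eq_sq_sum_add_sum_sq_sub (fun k => netload Θ k t) i (s.1 t - s.2.1 t)

end Billing

theorem stmt9_general (N T : ℕ) (α β : ℝ)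
    (lamImp lamExp : Fin T → ℝ) :
    ∀ (i : Fin N) (Θ : Fin N → Strat T) (s' : Strat T),
      bill lamImp lamExp α β (Function.update Θ i s') i - bill lamImp lamExp α β Θ i =
        potential lamImp lamExp α β (Function.update Θ i s') -
          potential lamImp lamExp α β Θ := by
  intro i Θ s'
  have hown := sum_apply_update_sub_sum (ownCost lamImp lamExp β) Θ i s'
  have hinteraction := two_mul_sum_interaction_update_sub Θ i s'
  rw [bill_eq_ownCost_add, bill_eq_ownCost_add, potential_eq_sum_ownCost_add,
    potential_eq_sum_ownCost_add, Function.update_self]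
  linear_combination α / 2 * hinteraction - hown

/-- The continuous proportional billing game is an exact potential game with potential
`P(Θ) = f(Θ) - (α/2) ∑_t ∑_i l_i^t L_{-i}^t`. -/
theorem stmt9 (N T : ℕ) (α β : ℝ) (hα : 0 < α) (hβ : 0 < β)
    (lamImp lamExp : Fin T → ℝ) :
    ∀ (i : Fin N) (Θ : Fin N → Strat T) (s' : Strat T),
      bill lamImp lamExp α β (Function.update Θ i s') i - bill lamImp lamExp α β Θ i =
        potential lamImp lamExp α β (Function.update Θ i s') -
          potential lamImp lamExp α β Θ :=
  stmt9_general N T α β lamImp lamExp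
end

section
/- The exact potential P(Θ) = f(Θ) − (α/2) Σ_t Σ_i l_i^t L_{-i}^t satisfies P(Θ) = Σ_t [Σ_i (λ_imp^t l_i^{t+} − λ_exp^t l_i^{t−}) + (α/2)((L^t)^2 + Σ_i (l_i^t)^2)] + Σ_i β p̄_i and hence is convex in Θ. -/
open Finset

/-! Since `∑ᵢ lᵢ L₋ᵢ = L² − ∑ᵢ lᵢ²`, the potential is a linear function of `Θ` plus `α/2` times a
sum of squares of the linear functions `L^t` and `l_i^t`, hence convex. -/

theorem Finset.sum_mul_sum_sub_self {ι R : Type*} [CommRing R] (s : Finset ι) (x : ι → R) :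
    ∑ i ∈ s, x i * (∑ j ∈ s, x j - x i) = (∑ i ∈ s, x i) ^ 2 - ∑ i ∈ s, x i ^ 2 := by
  simp only [mul_sub, sum_sub_distrib, ← sum_mul, sq]

theorem convexOn_univ_sq_comp_linearMap {E : Type*} [AddCommGroup E] [Module ℝ E]
    (g : E →ₗ[ℝ] ℝ) : ConvexOn ℝ Set.univ fun x => g x ^ 2 :=
  even_two.convexOn_pow.comp_linearMap g (f := fun y : ℝ => y ^ 2)

theorem ConvexOn.finset_sum {ι E : Type*} [AddCommGroup E] [Module ℝ E] {D : Set E}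
    {f : ι → E → ℝ} (hD : Convex ℝ D) (s : Finset ι) (hf : ∀ i ∈ s, ConvexOn ℝ D (f i)) :
    ConvexOn ℝ D fun x => ∑ i ∈ s, f i x := by
  simpa only [Finset.sum_fn] using
    Finset.sum_induction f (ConvexOn ℝ D) (fun _ _ => ConvexOn.add) (convexOn_const 0 hD) hf

section Potential

variable {N T : ℕ}

def netloadₗ (i : Fin N) (t : Fin T) : (Fin N → Strat T) →ₗ[ℝ] ℝ where
  toFun Θ := netload Θ i t
  map_add' Θ Θ' := by simp only [netload, Pi.add_apply, Prod.fst_add, Prod.snd_add]; ring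
  map_smul' c Θ := by simp only [netload, Pi.smul_apply, Prod.smul_fst, Prod.smul_snd,
    smul_eq_mul, RingHom.id_apply]; ring

def aggloadₗ (t : Fin T) : (Fin N → Strat T) →ₗ[ℝ] ℝ where
  toFun Θ := aggload Θ t
  map_add' Θ Θ' := by
    simp only [aggload, ← sum_add_distrib]
    exact sum_congr rfl fun i _ => (netloadₗ i t).map_add Θ Θ'
  map_smul' c Θ := by
    simp only [aggload, RingHom.id_apply, smul_eq_mul, mul_sum]
    exact sum_congr rfl fun i _ => (netloadₗ i t).map_smul c Θ

def linearCostₗ (lamImp lamExp : Fin T → ℝ) (β : ℝ) : (Fin N → Strat T) →ₗ[ℝ] ℝ where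
  toFun Θ := ∑ t, ∑ i, (lamImp t * (Θ i).1 t - lamExp t * (Θ i).2.1 t) + ∑ i, β * (Θ i).2.2
  map_add' Θ Θ' := by
    simp only [Pi.add_apply, Prod.fst_add, Prod.snd_add, mul_add, add_sub_add_comm,
      sum_add_distrib]
    ring
  map_smul' c Θ := by
    simp only [Pi.smul_apply, Prod.smul_fst, Prod.smul_snd, smul_eq_mul, RingHom.id_apply,
      mul_add, mul_sum, mul_sub, mul_left_comm]

theorem potential_eq (lamImp lamExp : Fin T → ℝ) (α β : ℝ) (Θ : Fin N → Strat T) :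
    potential lamImp lamExp α β Θ =
      (∑ t, ((∑ i, (lamImp t * (Θ i).1 t - lamExp t * (Θ i).2.1 t)) +
        α / 2 * ((aggload Θ t) ^ 2 + ∑ i, (netload Θ i t) ^ 2))) + ∑ i, β * (Θ i).2.2 := by
  have cross (t : Fin T) : ∑ i, netload Θ i t * (aggload Θ t - netload Θ i t) =
      aggload Θ t ^ 2 - ∑ i, netload Θ i t ^ 2 :=
    sum_mul_sum_sub_self _ _
  rw [potential, totalCost, sum_congr rfl fun t _ => cross t, mul_sum, add_sub_right_comm,
    ← sum_sub_distrib]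
  exact congrArg₂ _ (sum_congr rfl fun _ _ => by ring) rfl

theorem potential_eq_linearCostₗ_add (lamImp lamExp : Fin T → ℝ) (α β : ℝ) :
    potential (N := N) lamImp lamExp α β = fun Θ => linearCostₗ lamImp lamExp β Θ +
      α / 2 * ∑ t, (aggloadₗ t Θ ^ 2 + ∑ i, netloadₗ i t Θ ^ 2) := by
  funext Θ
  rw [potential_eq, sum_add_distrib, mul_sum]
  simp only [linearCostₗ, LinearMap.coe_mk, AddHom.coe_mk, aggloadₗ, netloadₗ]
  ring

end Potential

theorem stmt10_general (N T : ℕ) (α β : ℝ) (hα : 0 < α)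
    (lamImp lamExp : Fin T → ℝ) :
    (∀ Θ : Fin N → Strat T,
      potential lamImp lamExp α β Θ =
        (∑ t, ((∑ i, (lamImp t * (Θ i).1 t - lamExp t * (Θ i).2.1 t)) +
          α / 2 * ((aggload Θ t) ^ 2 + ∑ i, (netload Θ i t) ^ 2)))
          + ∑ i, β * (Θ i).2.2) ∧
    ConvexOn ℝ Set.univ (potential (N := N) lamImp lamExp α β) := by
  refine ⟨potential_eq lamImp lamExp α β, ?_⟩
  have quadratic : ConvexOn ℝ Set.univ fun Θ : Fin N → Strat T =>
      ∑ t, (aggloadₗ t Θ ^ 2 + ∑ i, netloadₗ i t Θ ^ 2) :=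
    ConvexOn.finset_sum convex_univ _ fun t _ => (convexOn_univ_sq_comp_linearMap (aggloadₗ t)).add <|
      ConvexOn.finset_sum convex_univ _ fun i _ => convexOn_univ_sq_comp_linearMap (netloadₗ i t)
  rw [potential_eq_linearCostₗ_add]
  exact (LinearMap.convexOn _ convex_univ).add (quadratic.smul (by positivity))

/-- The potential equals
`∑_t [∑_i (λ⁺ l⁺ - λ⁻ l⁻) + (α/2)((L^t)² + ∑_i (l_i^t)²)] + ∑_i β p̄_i`, hence is convex. -/
theorem stmt10 (N T : ℕ) (α β : ℝ) (hα : 0 < α) (hβ : 0 < β)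
    (lamImp lamExp : Fin T → ℝ) :
    (∀ Θ : Fin N → Strat T,
      potential lamImp lamExp α β Θ =
        (∑ t, ((∑ i, (lamImp t * (Θ i).1 t - lamExp t * (Θ i).2.1 t)) +
          α / 2 * ((aggload Θ t) ^ 2 + ∑ i, (netload Θ i t) ^ 2)))
          + ∑ i, β * (Θ i).2.2) ∧
    ConvexOn ℝ Set.univ (potential (N := N) lamImp lamExp α β) :=
  stmt10_general N T α β hα lamImp lamExp
end

section
/- For a jointly convex generalized Nash equilibrium problem, every solution of VI(C, F) with C the joint convex strategy set and F(Θ) = (∇_{Θ_i} b_i(Θ))_i is a generalized Nash equilibrium. -/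
open scoped RealInnerProductSpace

/-!
Testing the variational inequality at a unilateral deviation `Function.update Θstar i θ` kills
every term but the `i`-th, leaving the first-order condition `0 ≤ ⟪θ - Θstar i, ∇ b_i⟫` of player
`i`'s problem; for a convex objective this condition already implies optimality.
-/

open AffineMap in
theorem ConvexOn.hasFDerivAt_apply_sub_le {E : Type*} [NormedAddCommGroup E] [NormedSpace ℝ E]
    {S : Set E} {f : E → ℝ} {f' : E →L[ℝ] ℝ} {x y : E} (hf : ConvexOn ℝ S f)
    (hf' : HasFDerivAt f f' x) (hx : x ∈ S) (hy : y ∈ S) :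
    f' (y - x) ≤ f y - f x := by
  have hline : ConvexOn ℝ (lineMap x y ⁻¹' S) (f ∘ lineMap (k := ℝ) x y) := hf.comp_affineMap _
  have hderiv : HasDerivAt (f ∘ lineMap (k := ℝ) x y) (f' (y - x)) 0 := by
    simpa using hf'.comp_hasDerivAt_of_eq (0 : ℝ) hasDerivAt_lineMap (lineMap_apply_zero x y).symm
  simpa [slope_def_field] using
    hline.le_slope_of_hasDerivAt (by simpa using hx) (by simpa using hy) one_pos hderiv

theorem ConvexOn.le_of_inner_gradient_nonneg {E : Type*} [NormedAddCommGroup E]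
    [InnerProductSpace ℝ E] [CompleteSpace E] {S : Set E} {f : E → ℝ} {x y : E}
    (hf : ConvexOn ℝ S f) (hfx : DifferentiableAt ℝ f x) (hx : x ∈ S) (hy : y ∈ S)
    (h : 0 ≤ ⟪y - x, gradient f x⟫) : f x ≤ f y := by
  have := hf.hasFDerivAt_apply_sub_le hfx.hasGradientAt.hasFDerivAt hx hy
  rw [InnerProductSpace.toDual_apply_apply, real_inner_comm] at this
  linarith

theorem Fintype.sum_inner_update_sub {ι : Type*} [Fintype ι] [DecidableEq ι] {E : ι → Type*}
    [∀ i, NormedAddCommGroup (E i)] [∀ i, InnerProductSpace ℝ (E i)]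
    (x g : ∀ i, E i) (i : ι) (v : E i) :
    ∑ j, ⟪Function.update x i v j - x j, g j⟫ = ⟪v - x i, g i⟫ := by
  rw [Fintype.sum_eq_single i fun j hj => by simp [Function.update_of_ne hj]]
  simp

theorem stmt15_general {ι : Type} [Fintype ι] [DecidableEq ι] (n : ι → ℕ)
    (C : Set (∀ i, EuclideanSpace ℝ (Fin (n i))))
    (b : ι → (∀ i, EuclideanSpace ℝ (Fin (n i))) → ℝ)
    (hbdiff : ∀ i, ContDiff ℝ 1 (b i))
    (hbconv : ∀ i Θ, ConvexOn ℝ {θ | Function.update Θ i θ ∈ C}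
      (fun θ => b i (Function.update Θ i θ)))
    (Θstar : ∀ i, EuclideanSpace ℝ (Fin (n i))) (hmem : Θstar ∈ C)
    (hVI : ∀ Θ ∈ C,
      0 ≤ ∑ i, ⟪Θ i - Θstar i,
        gradient (fun θ => b i (Function.update Θstar i θ)) (Θstar i)⟫) :
    ∀ (i : ι) (θ : EuclideanSpace ℝ (Fin (n i))), Function.update Θstar i θ ∈ C →
      b i Θstar ≤ b i (Function.update Θstar i θ) := by
  intro i θ hθ
  have hdev := hVI _ hθ
  rw [Fintype.sum_inner_update_sub] at hdev
  have hdiff : DifferentiableAt ℝ (fun θ => b i (Function.update Θstar i θ)) (Θstar i) :=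
    ((hbdiff i).differentiable one_ne_zero _).comp _ (hasFDerivAt_update Θstar _).differentiableAt
  simpa using (hbconv i Θstar).le_of_inner_gradient_nonneg hdiff (by simpa using hmem) hθ hdev

/-- For a jointly convex GNEP, every solution of `VI(C, F)` with
`F(Θ) = (∇_{Θ_i} b_i(Θ))_i` is a generalized Nash equilibrium. -/
theorem stmt15 {ι : Type} [Fintype ι] [DecidableEq ι] (n : ι → ℕ)
    (C : Set (∀ i, EuclideanSpace ℝ (Fin (n i))))
    (hCcl : IsClosed C) (hCconv : Convex ℝ C)
    (b : ι → (∀ i, EuclideanSpace ℝ (Fin (n i))) → ℝ)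
    (hbdiff : ∀ i, ContDiff ℝ 1 (b i))
    (hbconv : ∀ i Θ, ConvexOn ℝ {θ | Function.update Θ i θ ∈ C}
      (fun θ => b i (Function.update Θ i θ)))
    (Θstar : ∀ i, EuclideanSpace ℝ (Fin (n i))) (hmem : Θstar ∈ C)
    (hVI : ∀ Θ ∈ C,
      0 ≤ ∑ i, ⟪Θ i - Θstar i,
        gradient (fun θ => b i (Function.update Θstar i θ)) (Θstar i)⟫) :
    ∀ (i : ι) (θ : EuclideanSpace ℝ (Fin (n i))), Function.update Θstar i θ ∈ C →
      b i Θstar ≤ b i (Function.update Θstar i θ) :=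
  stmt15_general n C b hbdiff hbconv Θstar hmem hVI
end

section
/- Let A be an (N+1)×(N+1) Z-matrix (nonpositive off-diagonal entries) with diagonal entries τ and off-diagonal entries −2α (for indices i,j ≤ N, i ≠ j) and −μ (in the last row and column), where α, μ, τ > 0. If τ > α(N−1) + √(α²(N−1)² + μ²·N), then A is a P-matrix. -/
set_option maxHeartbeats 1000000

open Finset Matrix

private lemma sum_eq_sum_comp {n m : Type*} [Fintype n] [Fintype m] [DecidableEq n]
    (f : m → n) (hf : Function.Injective f) (g : n → ℝ)
    (hg : ∀ j, (∀ i, f i ≠ j) → g j = 0) : ∑ j, g j = ∑ i, g (f i) := by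
  have h1 : ∑ j ∈ Finset.univ.image f, g j = ∑ i, g (f i) :=
    Finset.sum_image (fun a _ b _ h => hf h)
  have h2 : ∑ j ∈ Finset.univ.image f, g j = ∑ j, g j :=
    Finset.sum_subset (Finset.subset_univ _)
      (fun j _ hj => hg j fun i hij => hj (Finset.mem_image.mpr ⟨i, Finset.mem_univ i, hij⟩))
  rw [← h2, h1]

private lemma posDef_submatrix_inj {n m : Type*} [Fintype n] [Fintype m]
    [DecidableEq n] [DecidableEq m]
    {M : Matrix n n ℝ} (hM : M.PosDef) (f : m → n) (hf : Function.Injective f) :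
    (M.submatrix f f).PosDef := by
  refine Matrix.posDef_iff_dotProduct_mulVec.mpr ⟨?_, ?_⟩
  · have h1 := hM.1
    ext i j
    have := congrFun (congrFun h1 (f i)) (f j)
    simpa [Matrix.conjTranspose_apply] using this
  · intro x hx
    set y : n → ℝ := Function.extend f x 0 with hy
    have hyf : ∀ i, y (f i) = x i := fun i => hf.extend_apply x 0 i
    have hy0 : ∀ j, (∀ i, f i ≠ j) → y j = 0 := by
      intro j h
      rw [hy, Function.extend_apply' _ _ _ (by rintro ⟨i, rfl⟩; exact h i rfl)]
      rfl
    have hyne : y ≠ 0 := by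
      intro h0
      apply hx
      funext i
      have := congrFun h0 (f i)
      rw [hyf i] at this
      exact this
    have hmv : ∀ i, (M.submatrix f f *ᵥ x) i = (M *ᵥ y) (f i) := by
      intro i
      simp only [Matrix.mulVec, dotProduct, Matrix.submatrix_apply]
      rw [sum_eq_sum_comp f hf (fun k => M (f i) k * y k)
        (fun j hj => by show M (f i) j * y j = 0; rw [hy0 j hj, mul_zero])]
      simp [hyf]
    have key : dotProduct (star x) (M.submatrix f f *ᵥ x) =
        dotProduct (star y) (M *ᵥ y) := by
      simp only [dotProduct, Pi.star_apply, star_trivial]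
      rw [sum_eq_sum_comp f hf (fun j => y j * (M *ᵥ y) j)
        (fun j hj => by show y j * (M *ᵥ y) j = 0; rw [hy0 j hj, zero_mul])]
      exact Finset.sum_congr rfl fun i _ => by rw [hmv i, hyf i]
    rw [key]
    exact hM.dotProduct_mulVec_pos hyne

/-- The (N+1)×(N+1) Z-matrix with diagonal `τ`, off-diagonal entries `-2α` among the
first `N` indices and `-μ` in the last row/column, is a P-matrix (all principal minors
positive) whenever `τ > α(N-1) + √(α²(N-1)² + μ²N)`. -/
theorem stmt17 (N : ℕ) (hN : 1 ≤ N) (α μ τ : ℝ) (hα : 0 < α) (hμ : 0 < μ)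
    (A : Matrix (Fin (N + 1)) (Fin (N + 1)) ℝ)
    (hA : ∀ i j, A i j = if i = j then τ else
      if i ≠ Fin.last N ∧ j ≠ Fin.last N then -(2 * α) else -μ)
    (hτ : α * ((N : ℝ) - 1) +
      Real.sqrt (α ^ 2 * ((N : ℝ) - 1) ^ 2 + μ ^ 2 * (N : ℝ)) < τ) :
    ∀ S : Finset (Fin (N + 1)), S.Nonempty →
      0 < (A.submatrix (fun x : {x // x ∈ S} => (x : Fin (N + 1)))
        (fun x : {x // x ∈ S} => (x : Fin (N + 1)))).det := by
  have hN1 : (1 : ℝ) ≤ (N : ℝ) := by exact_mod_cast hN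
  have hNpos : (0 : ℝ) < (N : ℝ) := by linarith
  set r : ℝ := Real.sqrt (α ^ 2 * ((N : ℝ) - 1) ^ 2 + μ ^ 2 * (N : ℝ)) with hrdef
  have hr0 : 0 ≤ r := Real.sqrt_nonneg _
  have hr2 : r ^ 2 = α ^ 2 * ((N : ℝ) - 1) ^ 2 + μ ^ 2 * (N : ℝ) := by
    rw [hrdef, Real.sq_sqrt]
    positivity
  have ha0 : 0 ≤ α * ((N : ℝ) - 1) := by nlinarith
  have hμN : 0 < μ ^ 2 * (N : ℝ) := by positivity
  have hr_gt : α * ((N : ℝ) - 1) < r := by nlinarith [hr2, hr0, ha0, hμN]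
  have hτ2 : 0 < τ - 2 * α * ((N : ℝ) - 1) := by linarith
  have hτpos : 0 < τ := by nlinarith
  have hquad : μ ^ 2 * (N : ℝ) < τ ^ 2 - 2 * α * ((N : ℝ) - 1) * τ := by
    nlinarith [hr2, hr0, hτ, ha0]
  -- A is positive definite
  have hApos : A.PosDef := by
    refine Matrix.posDef_iff_dotProduct_mulVec.mpr ⟨?_, ?_⟩
    · ext i j
      rw [Matrix.conjTranspose_apply, hA, hA, star_trivial]
      by_cases h : i = j
      · simp [h]
      · rw [if_neg h, if_neg (Ne.symm h : j ≠ i)]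
        by_cases hiL : i = Fin.last N <;> by_cases hjL : j = Fin.last N <;>
          simp [hiL, hjL]
    · intro x hx
      set L : Fin (N + 1) := Fin.last N with hL
      set E : Finset (Fin (N + 1)) := Finset.univ.erase L with hE
      set s : ℝ := x L with hs
      set S : ℝ := ∑ i ∈ E, x i with hSdef
      set P : ℝ := ∑ i ∈ E, (x i) ^ 2 with hPdef
      have hcard : (E.card : ℝ) = N := by
        rw [hE, Finset.card_erase_of_mem (Finset.mem_univ L)]
        simp
      have hrow : ∀ i, (A *ᵥ x) i =
          if i = L then τ * s - μ * S else (τ + 2 * α) * x i - 2 * α * S - μ * s := by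
        intro i
        by_cases hi : i = L
        · subst hi
          simp only [Matrix.mulVec, dotProduct, if_pos rfl]
          have h1 : ∀ j, A L j * x j = if j = L then τ * x j else -μ * x j := by
            intro j
            rw [hA]
            by_cases hj : j = L
            · subst hj; simp
            · rw [if_neg (fun h => hj h.symm), if_neg (fun h => h.1 rfl), if_neg hj]
          rw [Finset.sum_congr rfl fun j _ => h1 j,
            ← Finset.add_sum_erase Finset.univ _ (Finset.mem_univ L), if_pos rfl]
          have h2 : ∑ j ∈ Finset.univ.erase L, (if j = L then τ * x j else -μ * x j)
              = ∑ j ∈ Finset.univ.erase L, -μ * x j :=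
            Finset.sum_congr rfl fun j hj => if_neg (Finset.mem_erase.mp hj).1
          rw [h2, ← Finset.mul_sum]
          rw [hs, hSdef, hE]
          simp only [if_true]
          ring
        · simp only [Matrix.mulVec, dotProduct, if_neg hi]
          have h1 : ∀ j, A i j * x j =
              if j = i then τ * x j else if j = L then -μ * x j else -(2*α) * x j := by
            intro j
            rw [hA]
            by_cases hj : j = i
            · subst hj; simp
            · rw [if_neg (fun h => hj h.symm)]
              by_cases hjL : j = L
              · rw [if_neg (fun h => h.2 hjL), if_neg hj, if_pos hjL]
              · rw [if_pos ⟨hi, hjL⟩, if_neg hj, if_neg hjL]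
          rw [Finset.sum_congr rfl fun j _ => h1 j,
            ← Finset.add_sum_erase Finset.univ _ (Finset.mem_univ i), if_pos rfl]
          have hLmem : L ∈ Finset.univ.erase i := Finset.mem_erase.mpr ⟨Ne.symm hi, Finset.mem_univ L⟩
          rw [← Finset.add_sum_erase _ _ hLmem,
            if_neg (Ne.symm hi), if_pos rfl]
          have h2 : ∑ j ∈ (Finset.univ.erase i).erase L,
              (if j = i then τ * x j else if j = L then -μ * x j else -(2*α) * x j)
              = ∑ j ∈ (Finset.univ.erase i).erase L, -(2*α) * x j := by
            refine Finset.sum_congr rfl fun j hj => ?_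
            obtain ⟨hjL, hji⟩ := Finset.mem_erase.mp hj
            rw [if_neg (Finset.mem_erase.mp hji).1, if_neg hjL]
          rw [h2, ← Finset.mul_sum]
          have h3 : (Finset.univ.erase i).erase L = E.erase i := by
            rw [hE, Finset.erase_right_comm]
          have h4 : ∑ j ∈ E.erase i, x j = S - x i := by
            rw [hSdef]
            exact Finset.sum_erase_eq_sub (Finset.mem_erase.mpr ⟨hi, Finset.mem_univ i⟩)
          rw [h3, h4, hs]
          ring
      have hq : dotProduct (star x) (A *ᵥ x) =
          (τ + 2 * α) * P - 2 * α * S ^ 2 - 2 * μ * s * S + τ * s ^ 2 := by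
        simp only [dotProduct, Pi.star_apply, star_trivial]
        rw [← Finset.add_sum_erase Finset.univ _ (Finset.mem_univ L), hrow L, if_pos rfl]
        have h5 : ∑ i ∈ Finset.univ.erase L, x i * (A *ᵥ x) i
            = ∑ i ∈ E, ((τ + 2 * α) * (x i) ^ 2 - (2 * α * S + μ * s) * x i) := by
          refine Finset.sum_congr rfl fun i hi => ?_
          rw [hrow i, if_neg (Finset.mem_erase.mp hi).1]
          ring
        rw [h5, Finset.sum_sub_distrib, ← Finset.mul_sum, ← Finset.mul_sum,
          ← hPdef, ← hSdef, ← hs]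
        ring
      rw [hq]
      have hCS : S ^ 2 ≤ (N : ℝ) * P := by
        have := sq_sum_le_card_mul_sum_sq (s := E) (f := x)
        rw [← hSdef, ← hPdef] at this
        calc S ^ 2 ≤ (E.card : ℝ) * P := by exact_mod_cast this
          _ = (N : ℝ) * P := by rw [hcard]
      have hP0 : 0 ≤ P := Finset.sum_nonneg fun i _ => sq_nonneg _
      have h1 : 0 ≤ (τ + 2 * α) * ((N : ℝ) * P - S ^ 2) :=
        mul_nonneg (by linarith) (by linarith)
      by_cases hs0 : s = 0
      · have hPpos : 0 < P := by
          obtain ⟨i, hine⟩ := Function.ne_iff.mp hx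
          have hiL : i ≠ L := by
            intro h
            rw [h] at hine
            exact hine hs0
          refine Finset.sum_pos' (fun j _ => sq_nonneg _)
            ⟨i, Finset.mem_erase.mpr ⟨hiL, Finset.mem_univ i⟩, ?_⟩
          exact sq_pos_of_ne_zero hine
        rcases eq_or_ne S 0 with hS0 | hS0
        · rw [hs0, hS0]
          nlinarith [mul_pos (show (0:ℝ) < τ + 2 * α by linarith) hPpos]
        · have hS2 : 0 < S ^ 2 := sq_pos_of_ne_zero hS0
          have h2 : 0 < (τ - 2 * α * ((N : ℝ) - 1)) * S ^ 2 := mul_pos hτ2 hS2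
          rw [hs0]
          nlinarith [h1, h2, hNpos]
      · have h7 : 0 < s ^ 2 := sq_pos_of_ne_zero hs0
        have h5 : 0 < τ * (τ - 2 * α * ((N : ℝ) - 1)) - μ ^ 2 * (N : ℝ) := by nlinarith
        have h6 := sq_nonneg ((τ - 2 * α * ((N : ℝ) - 1)) * S - μ * (N : ℝ) * s)
        have h57 := mul_pos h5 h7
        have hNa := mul_pos hNpos hτ2
        nlinarith [h1, h6, h57, hNa, mul_pos hNpos h57,
          mul_nonneg hτ2.le h1, mul_pos hNpos (mul_pos h5 h7)]
  intro S hS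
  exact (posDef_submatrix_inj hApos _ Subtype.coe_injective).det_pos
end
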